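/- arXiv:2410.06025 — 3 statements merged into one kernel-verified Lean document; each statement's English description precedes it below -/
import Mathlib

section
/- Let d, K ≥ 1, r > 0, and let z : Fin K → EuclideanSpace ℝ (Fin d) satisfy ‖z j - z k‖ > 2r for all j ≠ k. Let x ∈ EuclideanSpace ℝ (Fin d) with x ≠ z k for every k, and let Δ(x) = Σ_{k} max(r/‖x - z k‖ - 1, 0) • (x - z k) be the SPELL correction. Then ‖x + Δ(x) - z k‖ ≥ r for every k; that is, when the shields are pairwise disjoint, the SPELL-corrected point lies outside the interior of every shield. -/
/-- With pairwise disjoint shields, the SPELL-corrected point lies outside the interior of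
every shield. -/
theorem spell_corrected_outside_all_shields (d K : ℕ) (hd : 1 ≤ d) (hK : 1 ≤ K)
    (r : ℝ) (hr : 0 < r) (z : Fin K → EuclideanSpace ℝ (Fin d))
    (hsep : ∀ j k : Fin K, j ≠ k → 2 * r < ‖z j - z k‖)
    (x : EuclideanSpace ℝ (Fin d)) (hx : ∀ k, x ≠ z k) :
    ∀ k : Fin K,
      r ≤ ‖x + (∑ j : Fin K, max (r / ‖x - z j‖ - 1) 0 • (x - z j)) - z k‖ := by
  intro k
  have hnpos : ∀ j, 0 < ‖x - z j‖ := fun j =>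
    norm_pos_iff.2 (sub_ne_zero.2 (hx j))
  have hzero : ∀ j, r ≤ ‖x - z j‖ → max (r / ‖x - z j‖ - 1) 0 = 0 := by
    intro j hj
    apply max_eq_right
    have : r / ‖x - z j‖ ≤ 1 := (div_le_one (hnpos j)).2 hj
    linarith
  by_cases h : ∃ j, ‖x - z j‖ < r
  · obtain ⟨j0, hj0⟩ := h
    have hother : ∀ j, j ≠ j0 → r < ‖x - z j‖ := by
      intro j hj
      have h1 := hsep j j0 hj
      have htri : ‖z j - z j0‖ ≤ ‖x - z j‖ + ‖x - z j0‖ := by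
        have h2 := norm_add_le (z j - x) (x - z j0)
        rw [sub_add_sub_cancel] at h2
        calc ‖z j - z j0‖ ≤ ‖z j - x‖ + ‖x - z j0‖ := h2
          _ = ‖x - z j‖ + ‖x - z j0‖ := by rw [norm_sub_rev]
      linarith
    set c : ℝ := r / ‖x - z j0‖ - 1 with hc
    have hsum : (∑ j : Fin K, max (r / ‖x - z j‖ - 1) 0 • (x - z j))
        = c • (x - z j0) := by
      rw [Finset.sum_eq_single j0]
      · congr 1
        apply max_eq_left
        have : 1 ≤ r / ‖x - z j0‖ := (one_le_div (hnpos j0)).2 hj0.le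
        linarith
      · intro j _ hj
        rw [hzero j (hother j hj).le, zero_smul]
      · simp
    rw [hsum]
    have hc1 : c + 1 = r / ‖x - z j0‖ := by rw [hc]; ring
    have hkey : x + c • (x - z j0) - z j0 = (c + 1) • (x - z j0) := by
      rw [add_smul, one_smul]; abel
    have hnorm : ‖x + c • (x - z j0) - z j0‖ = r := by
      rw [hkey, norm_smul, hc1, Real.norm_of_nonneg (le_of_lt (div_pos hr (hnpos j0))),
        div_mul_cancel₀ _ (ne_of_gt (hnpos j0))]
    by_cases hk : k = j0
    · rw [hk, hnorm]
    · have h1 := hsep j0 k (fun hh => hk hh.symm)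
      set a := x + c • (x - z j0) - z j0 with ha
      have hsplit : x + c • (x - z j0) - z k = a + (z j0 - z k) := by
        rw [ha]; abel
      rw [hsplit]
      have h2 := norm_add_le (-a) (a + (z j0 - z k))
      rw [neg_add_cancel_left, norm_neg, hnorm] at h2
      linarith
  · push_neg at h
    have hsum : (∑ j : Fin K, max (r / ‖x - z j‖ - 1) 0 • (x - z j)) = 0 :=
      Finset.sum_eq_zero fun j _ => by rw [hzero j (h j), zero_smul]
    rw [hsum, add_zero]
    exact h k
end

section
/- Let (a_j)_{j ∈ ℕ} be a sequence of reals with 0 ≤ a_j ≤ 1 for all j, and define F(λ) = ∑'_{j ∈ ℕ} c_j(λ) * a_j where c_j(λ) = (λ/2)^j * Real.exp(-λ/2) / j!. Then for every λ ∈ ℝ, F has derivative at λ equal to (1/2) * ∑'_{j ∈ ℕ} c_j(λ) * (a_{j+1} - a_j). In particular, taking a_j = F_{χ²_{d+2j}}(x) to be chi-square CDFs, the noncentral chi-square CDF F_{χ²_{nc,d}(λ)}(x) = Σ_j c_j(λ) F_{χ²_{d+2j}}(x) satisfies ∂F/∂λ = (1/2) Σ_j c_j(λ) [F_{χ²_{d+2(j+1)}}(x)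 - F_{χ²_{d+2j}}(x)]. -/
/-!
Factoring out the exponential, `Σ_j c_j(λ) a_j = e^{-λ/2} E_a(λ/2)` with `E_a(x) = Σ_j a_j x^j / j!`
the exponential generating function of `a`. For bounded `a`, termwise differentiation (dominated
on a ball by the series of `e^x`) gives `E_a' = E_{a(·+1)}`, and the product rule yields
`(1/2) e^{-λ/2} (E_{a(·+1)}(λ/2) - E_a(λ/2)) = (1/2) Σ_j c_j(λ) (a_{j+1} - a_j)`.
-/

noncomputable def poissonWeight (j : ℕ) (l : ℝ) : ℝ :=
  (l / 2) ^ j * Real.exp (-l / 2) / (Nat.factorial j)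

open Nat Real

noncomputable def expGenFun (a : ℕ → ℝ) (x : ℝ) : ℝ :=
  ∑' j, a j * (x ^ j / j !)

lemma natCast_succ_mul_pow_div_factorial_succ (x : ℝ) (k : ℕ) :
    ((k + 1 : ℕ) : ℝ) * x ^ k / (k + 1)! = x ^ k / k ! := by
  rw [factorial_succ, cast_mul]
  field_simp

section BoundedSequence

variable {a : ℕ → ℝ} {C : ℝ}

lemma summable_mul_pow_div_factorial (hC : ∀ j, |a j| ≤ C) (x : ℝ) :
    Summable fun j => a j * (x ^ j / j !) := by
  refine .of_norm_bounded ((summable_pow_div_factorial |x|).mul_left C) fun j => ?_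
  simp only [norm_mul, norm_div, norm_pow, Real.norm_eq_abs, Nat.abs_cast]
  gcongr
  exact hC j

lemma hasDerivAt_expGenFun (hC : ∀ j, |a j| ≤ C) (x : ℝ) :
    HasDerivAt (expGenFun a) (expGenFun (fun j => a (j + 1)) x) x := by
  set R := |x| + 1
  set D : ℕ → ℝ → ℝ := fun j y => a j * (j * y ^ (j - 1) / j !)
  have hD_succ (k : ℕ) (y : ℝ) : D (k + 1) y = a (k + 1) * (y ^ k / k !) := by
    simp only [D, add_tsub_cancel_right, natCast_succ_mul_pow_div_factorial_succ]
  have hDeriv (j : ℕ) (y : ℝ) : HasDerivAt (fun z => a j * (z ^ j / j !)) (D j y) y :=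
    ((hasDerivAt_pow j y).div_const _).const_mul (a j)
  have hu : Summable fun j => C * (j * R ^ (j - 1) / j !) := by
    refine (summable_nat_add_iff 1).mp ?_
    simpa only [add_tsub_cancel_right, natCast_succ_mul_pow_div_factorial_succ]
      using (summable_pow_div_factorial R).mul_left C
  have hBound (j : ℕ) (y : ℝ) (hy : y ∈ Metric.ball x 1) :
      ‖D j y‖ ≤ C * (j * R ^ (j - 1) / j !) := by
    have hyR : |y| ≤ R := by
      have := abs_sub_abs_le_abs_sub y x
      rw [Metric.mem_ball, Real.dist_eq] at hy
      linarith
    simp only [D, norm_mul, norm_div, norm_pow, Real.norm_eq_abs, Nat.abs_cast]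
    gcongr
    · exact (abs_nonneg _).trans (hC 0)
    · exact hC j
  have hSum := hasDerivAt_tsum_of_isPreconnected hu Metric.isOpen_ball
    (convex_ball x 1).isPreconnected (fun j y _ => hDeriv j y) hBound
    (Metric.mem_ball_self one_pos) (summable_mul_pow_div_factorial hC x)
    (Metric.mem_ball_self one_pos)
  have hD_summable : Summable fun j => D j x :=
    .of_norm_bounded hu fun j => hBound j x (Metric.mem_ball_self one_pos)
  have hShift : expGenFun (fun j => a (j + 1)) x = ∑' j, D j x := by
    simp [hD_summable.tsum_eq_zero_add, D, expGenFun, hD_succ]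
  exact hShift ▸ hSum

end BoundedSequence

lemma poissonWeight_mul (j : ℕ) (t b : ℝ) :
    poissonWeight j t * b = exp (-t / 2) * (b * ((t / 2) ^ j / j !)) := by
  rw [poissonWeight]
  ring

lemma tsum_poissonWeight_mul (a : ℕ → ℝ) (t : ℝ) :
    ∑' j, poissonWeight j t * a j = exp (-t / 2) * expGenFun a (t / 2) := by
  simp only [poissonWeight_mul, expGenFun, tsum_mul_left]

lemma summable_poissonWeight_mul {a : ℕ → ℝ} {C : ℝ} (hC : ∀ j, |a j| ≤ C) (t : ℝ) :
    Summable fun j => poissonWeight j t * a j := by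
  simpa only [poissonWeight_mul] using (summable_mul_pow_div_factorial hC (t / 2)).mul_left _

/-- Derivative of a Poisson mixture `F(λ) = Σ_j c_j(λ) a_j` of `[0,1]`-valued coefficients:
`F'(λ) = (1/2) Σ_j c_j(λ) (a_{j+1} - a_j)`. In particular this gives `∂F_{χ²_{nc,d}(λ)}/∂λ`. -/
theorem poisson_mixture_hasDerivAt (a : ℕ → ℝ) (ha : ∀ j, 0 ≤ a j ∧ a j ≤ 1) (l : ℝ) :
    HasDerivAt (fun t => ∑' j : ℕ, poissonWeight j t * a j)
      ((1 / 2) * ∑' j : ℕ, poissonWeight j l * (a (j + 1) - a j)) l := by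
  have hC (j : ℕ) : |a j| ≤ 1 := abs_le.2 ⟨by linarith [(ha j).1], (ha j).2⟩
  have hHalf : HasDerivAt (fun t : ℝ => t / 2) (1 / 2) l := (hasDerivAt_id l).div_const 2
  have hExp : HasDerivAt (fun t : ℝ => exp (-t / 2)) (exp (-l / 2) * (-1 / 2)) l :=
    ((hasDerivAt_id l).neg.div_const 2).exp
  have hSeries : ∑' j, poissonWeight j l * (a (j + 1) - a j) =
      exp (-l / 2) * expGenFun (fun j => a (j + 1)) (l / 2) -
        exp (-l / 2) * expGenFun a (l / 2) := by
    simp only [mul_sub, (summable_poissonWeight_mul (fun j => hC (j + 1)) l).tsum_sub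
      (summable_poissonWeight_mul hC l), tsum_poissonWeight_mul]
  have hProd : HasDerivAt (fun t => exp (-t / 2) * expGenFun a (t / 2))
      (exp (-l / 2) * (-1 / 2) * expGenFun a (l / 2) +
        exp (-l / 2) * (expGenFun (fun j => a (j + 1)) (l / 2) * (1 / 2))) l :=
    hExp.mul (HasDerivAt.comp (h₂ := expGenFun a) l (hasDerivAt_expGenFun hC (l / 2)) hHalf)
  simp only [hSeries, tsum_poissonWeight_mul]
  exact hProd.congr_deriv (by ring)
end

section
/- Let d ≥ 1 and μ ∈ EuclideanSpace ℝ (Fin d), and let P = Measure.pi (fun i => gaussianReal (μ i) 1) be the law of a Gaussian vector X ~ N(μ, I_d) on ℝ^d. Then the pushforward of P under x ↦ Σ_i (x i)² equals the countable mixture Measure.sum (fun j => ENNReal.ofReal (c_j(‖μ‖²)) • gammaMeasure ((d : ℝ)/2 + j) (1/2)), where c_j(λ) = (λ/2)^j e^{-λ/2}/j!; that is, ‖X‖² follows the noncentral chi-square distribution χ²_{nc,d}(λ) with λ = ‖μ‖², realized as a Poisson(λ/2) mixture of Gamma((d+2j)/2, 1/2) distributions. -/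
/-!
The square `X²` of a single `N(m, 1)` variable has density
`(φ(√y - m) + φ(-√y - m)) / (2√y) = e^{-(y+m²)/2} cosh(m√y) / √(2πy)`; expanding `cosh` in its
power series writes it as the Poisson(m²/2) mixture of Gamma(1/2 + j, 1/2) densities, which is the
case `d = 1`. For larger `d`, `‖X‖²` is the convolution of the laws of the independent squares
`X_i²`, and such mixtures are closed under convolution: Gamma laws of a common rate add their
shapes, and the Poisson weights convolve as Poisson laws do, `c(λ) ⋆ c(λ') = c(λ + λ')`.
-/

open MeasureTheory ProbabilityTheory

open Real
open scoped ENNReal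

section PoissonWeight

open Finset

lemma poissonWeight_nonneg (j : ℕ) {l : ℝ} (hl : 0 ≤ l) : 0 ≤ poissonWeight j l := by
  unfold poissonWeight; positivity

lemma poissonWeight_add (n : ℕ) (a b : ℝ) :
    poissonWeight n (a + b) =
      ∑ p ∈ antidiagonal n, poissonWeight p.1 a * poissonWeight p.2 b := by
  rw [poissonWeight, add_div, (Commute.all (a / 2) (b / 2)).add_pow', neg_add, add_div, exp_add,
    Finset.sum_mul, Finset.sum_div]
  refine Finset.sum_congr rfl fun p hp => ?_
  rw [HasAntidiagonal.mem_antidiagonal] at hp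
  subst hp
  rw [poissonWeight, poissonWeight, nsmul_eq_mul, Nat.cast_choose ℝ (Nat.le_add_right p.1 p.2),
    Nat.add_sub_cancel_left]
  field_simp

end PoissonWeight

namespace MeasureTheory.Measure

open Finset in
lemma sum_eq_sum_antidiagonal {α A : Type*} [MeasurableSpace α] [AddMonoid A]
    [HasAntidiagonal A] (m : A × A → Measure α) :
    Measure.sum m = Measure.sum fun n => ∑ p ∈ antidiagonal n, m p := by
  ext s hs
  simp only [Measure.sum_apply _ hs, Measure.coe_finsetSum, Finset.sum_apply]
  rw [← HasAntidiagonal.sigmaAntidiagonalEquivProd.tsum_eq, ENNReal.tsum_sigma']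
  exact tsum_congr fun n => Finset.tsum_subtype (antidiagonal n) (fun p => m p s)

lemma sum_conv_sum {M ι ι' : Type*} [AddMonoid M] [MeasurableSpace M] [MeasurableAdd₂ M]
    [Countable ι'] (μ : ι → Measure M) (ν : ι' → Measure M) [∀ i, SFinite (ν i)] :
    Measure.sum μ ∗ Measure.sum ν = Measure.sum fun p : ι × ι' => μ p.1 ∗ ν p.2 := by
  simp only [Measure.conv, Measure.prod_sum, Measure.map_sum measurable_add.aemeasurable]

lemma map_sum_pi_eq_map_conv_map {α M : Type*} [MeasurableSpace α] [AddCommMonoid M]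
    [MeasurableSpace M] [MeasurableAdd₂ M] {n : ℕ} (μ : Fin (n + 1) → Measure α)
    [∀ i, SigmaFinite (μ i)] {f : α → M} (hf : Measurable f) :
    (Measure.pi μ).map (fun x => ∑ i, f (x i)) =
      (μ 0).map f ∗ (Measure.pi fun i : Fin n => μ i.succ).map (fun x => ∑ i, f (x i)) := by
  have hmp := measurePreserving_piFinSuccAbove μ 0
  simp only [Fin.succAbove_zero] at hmp
  have hsplit : (fun x : Fin (n + 1) → α => ∑ i, f (x i)) =
      (fun p : M × M => p.1 + p.2) ∘ Prod.map f (fun x : Fin n → α => ∑ i, f (x i)) ∘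
        MeasurableEquiv.piFinSuccAbove (fun _ => α) 0 := by
    funext x
    simp [Fin.sum_univ_succ, MeasurableEquiv.piFinSuccAbove_apply, Fin.tail]
  rw [hsplit, ← Measure.map_map (by fun_prop) (by fun_prop),
    ← Measure.map_map (by fun_prop) (MeasurableEquiv.measurable _), hmp.map_eq,
    ← Measure.map_prod_map _ _ hf (by fun_prop)]
  rfl

end MeasureTheory.Measure

section SquareOfDensity

open Set

lemma lintegral_eq_lintegral_Ioi_add_neg {h : ℝ → ℝ≥0∞} (hh : Measurable h) :
    ∫⁻ x, h x = ∫⁻ x in Ioi 0, (h x + h (-x)) := by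
  have hneg : ∫⁻ x in Iic 0, h x = ∫⁻ x in Ioi 0, h (-x) := by
    have := (Measure.measurePreserving_neg (volume : Measure ℝ)).setLIntegral_comp_preimage_emb
      (Homeomorph.neg ℝ).measurableEmbedding h (Iic 0)
    rw [show (fun x : ℝ => -x) ⁻¹' Iic 0 = Ici 0 by ext x; simp,
      Measure.restrict_congr_set Ioi_ae_eq_Ici.symm] at this
    exact this.symm
  rw [← lintegral_add_compl h measurableSet_Ioi, compl_Ioi, hneg, lintegral_add_left hh]

lemma lintegral_Ioi_eq_lintegral_Ioi_sqrt (F : ℝ → ℝ≥0∞) :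
    ∫⁻ x in Ioi 0, F x = ∫⁻ y in Ioi 0, ENNReal.ofReal (1 / (2 * √y)) * F √y := by
  have himage : sqrt '' Ioi 0 = Ioi 0 :=
    Subset.antisymm (image_subset_iff.2 fun y hy => sqrt_pos.2 hy) fun x (hx : 0 < x) =>
      ⟨x ^ 2, show 0 < x ^ 2 by positivity, sqrt_sq hx.le⟩
  conv_lhs => rw [← himage]
  rw [lintegral_image_eq_lintegral_abs_deriv_mul (f := sqrt) measurableSet_Ioi
    (fun y hy => (hasDerivAt_sqrt (ne_of_gt hy)).hasDerivWithinAt)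
    (fun y (hy : 0 < y) z (hz : 0 < z) hyz => (sqrt_inj hy.le hz.le).1 hyz)]
  refine setLIntegral_congr_fun measurableSet_Ioi fun y hy => ?_
  rw [abs_of_pos (by have := sqrt_pos.2 hy; positivity)]

lemma map_sq_withDensity {f : ℝ → ℝ≥0∞} (hf : Measurable f) :
    (volume.withDensity f).map (· ^ 2) = volume.withDensity ((Ioi 0).indicator fun y =>
      ENNReal.ofReal (1 / (2 * √y)) * (f √y + f (-√y))) := by
  refine Measure.ext_of_lintegral _ fun φ hφ => ?_
  have hdens : Measurable ((Ioi (0 : ℝ)).indicator fun y =>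
      ENNReal.ofReal (1 / (2 * √y)) * (f √y + f (-√y))) :=
    Measurable.indicator (by fun_prop) measurableSet_Ioi
  rw [lintegral_map hφ (by fun_prop), lintegral_withDensity_eq_lintegral_mul _ hf (by fun_prop),
    lintegral_withDensity_eq_lintegral_mul _ hdens hφ,
    lintegral_eq_lintegral_Ioi_add_neg (by fun_prop), lintegral_Ioi_eq_lintegral_Ioi_sqrt,
    ← lintegral_indicator measurableSet_Ioi]
  refine lintegral_congr fun y => ?_
  by_cases hy : y ∈ Ioi 0
  · simp only [indicator_of_mem hy, Pi.mul_apply, neg_sq, sq_sqrt (le_of_lt hy)]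
    ring
  · simp [indicator_of_notMem hy]

end SquareOfDensity

namespace ProbabilityTheory

open Set

instance (a r : ℝ) : SFinite (gammaMeasure a r) := by
  unfold gammaMeasure; infer_instance

lemma measurable_gammaPDF (a r : ℝ) : Measurable (gammaPDF a r) :=
  ENNReal.measurable_ofReal.comp (measurable_gammaPDFReal a r)

lemma gammaPDFReal_mul_gammaPDFReal_of_mem_Ioo {a b r z u : ℝ} (ha : 0 < a) (hb : 0 < b)
    (hr : 0 < r) (hz : 0 < z) (hu : u ∈ Ioo 0 1) :
    z * (gammaPDFReal a r (z * u) * gammaPDFReal b r (z - z * u)) =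
      gammaPDFReal (a + b) r z * (Gamma (a + b) / (Gamma a * Gamma b) *
        (u ^ (a - 1) * (1 - u) ^ (b - 1))) := by
  obtain ⟨hu0, hu1⟩ := hu
  have h1u : 0 < 1 - u := by linarith
  rw [gammaPDFReal, if_pos (by positivity), gammaPDFReal, if_pos (by nlinarith),
    gammaPDFReal, if_pos hz.le, show z - z * u = z * (1 - u) by ring,
    mul_rpow hz.le hu0.le, mul_rpow hz.le h1u.le, rpow_add hr,
    show a + b - 1 = (a - 1) + (b - 1) + 1 by ring, rpow_add hz, rpow_add hz, rpow_one,
    show -(r * z) = -(r * (z * u)) + -(r * (z * (1 - u))) by ring, exp_add]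
  have := Gamma_pos_of_pos ha
  have := Gamma_pos_of_pos hb
  have := Gamma_pos_of_pos (add_pos ha hb)
  field_simp

/-- `C` is the normalized Beta integral `B(a, b) Γ(a + b) / (Γ(a) Γ(b))`, i.e. `1`; rather than
evaluating it, `gammaMeasure_conv_gammaMeasure` reads it off from the total masses. -/
lemma exists_lconvolution_gammaPDF_eq {a b r : ℝ} (ha : 0 < a) (hb : 0 < b) (hr : 0 < r) :
    ∃ C : ℝ≥0∞, ∀ z ≠ 0, (gammaPDF a r ⋆ₗ gammaPDF b r) z = C * gammaPDF (a + b) r z := by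
  refine ⟨∫⁻ u in Ioo 0 1, ENNReal.ofReal (Gamma (a + b) / (Gamma a * Gamma b) *
    (u ^ (a - 1) * (1 - u) ^ (b - 1))), fun z hz => ?_⟩
  have hout : ∀ x ∉ Icc 0 z, gammaPDF a r x * gammaPDF b r (-x + z) = 0 := fun x hx => by
    rcases not_and_or.1 hx with hx | hx
    · rw [gammaPDF_of_neg (not_le.1 hx), zero_mul]
    · rw [gammaPDF_of_neg (x := -x + z) (by linarith [not_le.1 hx]), mul_zero]
  rcases hz.lt_or_gt with hz | hz
  · rw [gammaPDF_of_neg hz, mul_zero, lconvolution_def]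
    exact (lintegral_congr fun x => hout x fun hx => by linarith [hx.1, hx.2]).trans
      lintegral_zero
  have hsubst := lintegral_image_eq_lintegral_abs_deriv_mul
    (measurableSet_Ioo (a := (0 : ℝ)) (b := 1)) (f := (z * ·)) (f' := fun _ => z)
    (fun u _ => by simpa using ((hasDerivAt_id u).const_mul z).hasDerivWithinAt)
    (mul_right_injective₀ hz.ne').injOn (fun x => gammaPDF a r x * gammaPDF b r (-x + z))
  rw [image_mul_left_Ioo hz, mul_zero, mul_one, abs_of_pos hz] at hsubst
  calc (gammaPDF a r ⋆ₗ gammaPDF b r) z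
      = ∫⁻ x in Ioo 0 z, gammaPDF a r x * gammaPDF b r (-x + z) := by
        rw [lconvolution_def, setLIntegral_congr Ioo_ae_eq_Icc,
          ← lintegral_add_compl _ measurableSet_Icc,
          setLIntegral_congr_fun measurableSet_Icc.compl hout, lintegral_zero, add_zero]
    _ = ∫⁻ u in Ioo 0 1, gammaPDF (a + b) r z * ENNReal.ofReal
          (Gamma (a + b) / (Gamma a * Gamma b) * (u ^ (a - 1) * (1 - u) ^ (b - 1))) := by
        rw [hsubst]
        refine setLIntegral_congr_fun measurableSet_Ioo fun u hu => ?_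
        simp only [gammaPDF]
        rw [← ENNReal.ofReal_mul (gammaPDFReal_nonneg ha hr _), ← ENNReal.ofReal_mul hz.le,
          neg_add_eq_sub, gammaPDFReal_mul_gammaPDFReal_of_mem_Ioo ha hb hr hz hu,
          ENNReal.ofReal_mul (gammaPDFReal_nonneg (add_pos ha hb) hr _)]
    _ = _ := by
        rw [lintegral_const_mul' (gammaPDF (a + b) r z) _ ENNReal.ofReal_ne_top, mul_comm]

theorem gammaMeasure_conv_gammaMeasure {a b r : ℝ} (ha : 0 < a) (hb : 0 < b) (hr : 0 < r) :
    gammaMeasure a r ∗ gammaMeasure b r = gammaMeasure (a + b) r := by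
  obtain ⟨C, hC⟩ := exists_lconvolution_gammaPDF_eq ha hb hr
  have hconv : gammaMeasure a r ∗ gammaMeasure b r = C • gammaMeasure (a + b) r := by
    rw [gammaMeasure, gammaMeasure, gammaMeasure,
      conv_withDensity_eq_lconvolution (measurable_gammaPDF a r) (measurable_gammaPDF b r),
      ← withDensity_smul _ (measurable_gammaPDF _ _)]
    refine withDensity_congr_ae ?_
    filter_upwards [compl_mem_ae_iff.2 (measure_singleton (0 : ℝ))] with z hz using hC z hz
  have := isProbabilityMeasure_gammaMeasure ha hr
  have := isProbabilityMeasure_gammaMeasure hb hr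
  have := isProbabilityMeasure_gammaMeasure (add_pos ha hb) hr
  have hC1 : C = 1 := by simpa using (congrArg (· univ) hconv).symm
  rw [hconv, hC1, one_smul]

/-- The noncentral chi-square law with `k` degrees of freedom and noncentrality `l`. -/
noncomputable def noncentralChiSq (k l : ℝ) : Measure ℝ :=
  Measure.sum fun j : ℕ => ENNReal.ofReal (poissonWeight j l) • gammaMeasure (k / 2 + j) (1 / 2)

instance (k l : ℝ) : SFinite (noncentralChiSq k l) := by
  unfold noncentralChiSq; infer_instance

lemma noncentralChiSq_eq_withDensity (k l : ℝ) :
    noncentralChiSq k l = volume.withDensity fun y =>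
      ∑' j : ℕ, ENNReal.ofReal (poissonWeight j l) * gammaPDF (k / 2 + j) (1 / 2) y := by
  simp_rw [noncentralChiSq, gammaMeasure, ← withDensity_smul _ (measurable_gammaPDF _ _)]
  rw [← withDensity_tsum fun j => (measurable_gammaPDF _ _).const_smul _]
  congr 1
  ext y
  simp [ENNReal.tsum_apply]

theorem noncentralChiSq_conv {k k' l l' : ℝ} (hk : 0 < k) (hk' : 0 < k') (hl : 0 ≤ l)
    (hl' : 0 ≤ l') :
    noncentralChiSq k l ∗ noncentralChiSq k' l' = noncentralChiSq (k + k') (l + l') := by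
  have hterm : ∀ p : ℕ × ℕ,
      (ENNReal.ofReal (poissonWeight p.1 l) • gammaMeasure (k / 2 + p.1) (1 / 2)) ∗
        (ENNReal.ofReal (poissonWeight p.2 l') • gammaMeasure (k' / 2 + p.2) (1 / 2)) =
      ENNReal.ofReal (poissonWeight p.1 l * poissonWeight p.2 l') •
        gammaMeasure ((k + k') / 2 + ↑(p.1 + p.2)) (1 / 2) := fun p => by
    rw [Measure.conv_smul_left, Measure.conv_smul_right,
      gammaMeasure_conv_gammaMeasure (by positivity) (by positivity) (by norm_num), smul_smul,
      ENNReal.ofReal_mul (poissonWeight_nonneg _ hl), mul_comm (ENNReal.ofReal _)]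
    congr 2
    push_cast
    ring
  rw [noncentralChiSq, noncentralChiSq, Measure.sum_conv_sum, funext hterm,
    Measure.sum_eq_sum_antidiagonal, noncentralChiSq]
  refine congrArg Measure.sum (funext fun n => ?_)
  rw [poissonWeight_add, ENNReal.ofReal_sum_of_nonneg, Finset.sum_smul]
  · exact Finset.sum_congr rfl fun p hp => by
      rw [Finset.HasAntidiagonal.mem_antidiagonal.1 hp]
  · exact fun p _ => mul_nonneg (poissonWeight_nonneg _ hl) (poissonWeight_nonneg _ hl')

lemma Gamma_half_add_nat (j : ℕ) :
    Gamma (1 / 2 + j) = √π * (2 * j).factorial / (4 ^ j * j.factorial) := by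
  have h := Gamma_mul_Gamma_add_half (1 / 2 + j)
  rw [show 1 / 2 + (j : ℝ) + 1 / 2 = (j : ℕ) + 1 by ring, Gamma_nat_eq_factorial,
    show 2 * (1 / 2 + (j : ℝ)) = (2 * j : ℕ) + 1 by push_cast; ring, Gamma_nat_eq_factorial,
    show (1 : ℝ) - ((2 * j : ℕ) + 1) = -(2 * j : ℕ) by ring, rpow_neg zero_le_two,
    rpow_natCast, pow_mul] at h
  have h4 : (4 : ℝ) ^ j * (4 ^ j)⁻¹ = 1 := mul_inv_cancel₀ (by positivity)
  rw [eq_div_iff (by positivity)]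
  linear_combination (4 : ℝ) ^ j * h + ((2 * j).factorial * √π) * h4

lemma gaussianPDFReal_sqrt_add_neg_sqrt (m : ℝ) {y : ℝ} (hy : 0 ≤ y) :
    gaussianPDFReal m 1 √y + gaussianPDFReal m 1 (-√y) =
      2 * (exp (-(y + m ^ 2) / 2) / √(2 * π)) * cosh (m * √y) := by
  have hsq : √y ^ 2 = y := sq_sqrt hy
  rw [gaussianPDFReal, gaussianPDFReal, cosh_eq, NNReal.coe_one, mul_one, mul_one,
    show -(√y - m) ^ 2 / 2 = -(y + m ^ 2) / 2 + m * √y by linear_combination (-1 / 2 : ℝ) * hsq,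
    show -(-√y - m) ^ 2 / 2 = -(y + m ^ 2) / 2 + -(m * √y) by
      linear_combination (-1 / 2 : ℝ) * hsq, exp_add, exp_add]
  ring

lemma poissonWeight_mul_gammaPDFReal_half (m : ℝ) {y : ℝ} (hy : 0 < y) (j : ℕ) :
    poissonWeight j (m ^ 2) * gammaPDFReal (1 / 2 + j) (1 / 2) y =
      exp (-(y + m ^ 2) / 2) / (√(2 * π) * √y) * ((m * √y) ^ (2 * j) / (2 * j).factorial) := by
  rw [poissonWeight, gammaPDFReal, if_pos hy.le, Gamma_half_add_nat,
    rpow_add (by norm_num : (0 : ℝ) < 1 / 2), rpow_natCast,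
    show (1 / 2 : ℝ) + j - 1 = j + -(1 / 2) by ring, rpow_add hy, rpow_natCast,
    rpow_neg hy.le, ← sqrt_eq_rpow, ← sqrt_eq_rpow, sqrt_mul (by norm_num), one_div,
    sqrt_inv, show -(y + m ^ 2) / 2 = -(2⁻¹ * y) + -m ^ 2 / 2 by ring, exp_add, mul_pow,
    pow_mul, pow_mul, sq_sqrt hy.le, show (4 : ℝ) ^ j = 2 ^ j * 2 ^ j by rw [← mul_pow]; norm_num]
  have := j.factorial_pos
  have := (2 * j).factorial_pos
  have : 0 < √2 := by positivity
  have : 0 < √π := sqrt_pos.2 pi_pos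
  field_simp
  rw [div_pow, one_div_pow, ← pow_mul]
  field_simp

lemma hasSum_poissonWeight_mul_gammaPDFReal_half (m : ℝ) {y : ℝ} (hy : 0 < y) :
    HasSum (fun j : ℕ => poissonWeight j (m ^ 2) * gammaPDFReal (1 / 2 + j) (1 / 2) y)
      (1 / (2 * √y) * (gaussianPDFReal m 1 √y + gaussianPDFReal m 1 (-√y))) := by
  have hval : 1 / (2 * √y) * (2 * (exp (-(y + m ^ 2) / 2) / √(2 * π)) * cosh (m * √y)) =
      exp (-(y + m ^ 2) / 2) / (√(2 * π) * √y) * cosh (m * √y) := by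
    field_simp
  rw [funext (poissonWeight_mul_gammaPDFReal_half m hy), gaussianPDFReal_sqrt_add_neg_sqrt m hy.le,
    hval]
  exact (hasSum_cosh (m * √y)).mul_left _

theorem gaussianReal_map_sq (m : ℝ) :
    (gaussianReal m 1).map (· ^ 2) = noncentralChiSq 1 (m ^ 2) := by
  rw [gaussianReal_of_var_ne_zero m one_ne_zero, map_sq_withDensity (measurable_gaussianPDF m 1),
    noncentralChiSq_eq_withDensity]
  refine withDensity_congr_ae ?_
  filter_upwards [compl_mem_ae_iff.2 (measure_singleton (0 : ℝ))] with y hy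
  rcases (show y ≠ 0 from hy).lt_or_gt with hneg | hpos
  · simp [indicator_of_notMem (show y ∉ Ioi 0 from not_lt.2 hneg.le), gammaPDF_of_neg hneg]
  have hsum := hasSum_poissonWeight_mul_gammaPDFReal_half m hpos
  rw [indicator_of_mem (show y ∈ Ioi 0 from hpos), gaussianPDF, gaussianPDF,
    ← ENNReal.ofReal_add (gaussianPDFReal_nonneg _ _ _) (gaussianPDFReal_nonneg _ _ _),
    ← ENNReal.ofReal_mul (by positivity), ← hsum.tsum_eq,
    ENNReal.ofReal_tsum_of_nonneg (fun j => mul_nonneg (poissonWeight_nonneg _ (sq_nonneg m))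
      (gammaPDFReal_nonneg (by positivity) (by norm_num) _)) hsum.summable]
  exact tsum_congr fun j => ENNReal.ofReal_mul (poissonWeight_nonneg _ (sq_nonneg m))

theorem map_sum_sq_pi_gaussianReal (n : ℕ) (m : Fin (n + 1) → ℝ) :
    (Measure.pi fun i => gaussianReal (m i) 1).map (fun x => ∑ i, x i ^ 2) =
      noncentralChiSq (n + 1 : ℕ) (∑ i, m i ^ 2) := by
  induction n with
  | zero =>
    rw [Measure.map_sum_pi_eq_map_conv_map _ (f := (· ^ 2)) (by fun_prop), Measure.pi_of_empty, Measure.map_dirac',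
      gaussianReal_map_sq]
    · simp
    · fun_prop
  | succ n ih =>
    rw [Measure.map_sum_pi_eq_map_conv_map _ (f := (· ^ 2)) (by fun_prop), gaussianReal_map_sq, ih,
      noncentralChiSq_conv one_pos (by positivity) (sq_nonneg _)
        (Finset.sum_nonneg fun i _ => sq_nonneg _), Fin.sum_univ_succ (fun i => m i ^ 2)]
    push_cast
    ring_nf

end ProbabilityTheory

/-- For `X ~ N(μ, I_d)`, the squared norm `‖X‖²` follows the noncentral chi-square
distribution with `d` degrees of freedom and noncentrality `λ = ‖μ‖²`, realized as a
Poisson(λ/2) mixture of Gamma((d+2j)/2, 1/2) distributions. -/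
theorem gaussian_sq_norm_noncentral_chiSq (d : ℕ) (hd : 1 ≤ d)
    (μ : EuclideanSpace ℝ (Fin d)) :
    Measure.map (fun x : Fin d → ℝ => ∑ i, (x i) ^ 2)
      (Measure.pi fun i => gaussianReal (μ i) 1) =
    Measure.sum (fun j : ℕ =>
      ENNReal.ofReal (poissonWeight j (‖μ‖ ^ 2)) •
        gammaMeasure ((d : ℝ) / 2 + j) (1 / 2)) := by
  obtain ⟨n, rfl⟩ := Nat.exists_eq_add_of_le' hd
  rw [EuclideanSpace.real_norm_sq_eq]
  exact map_sum_sq_pi_gaussianReal n (μ ·)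
end
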